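/- arXiv:1801.09786 — 3 statements merged into one kernel-verified Lean document; each statement's English description precedes it below -/
import Mathlib

section
/- Let G be a finite group acting on a finite set Ω and F a field. The family of orbital matrices (A(Δ))_{Δ an orbital} is linearly independent, and its span is exactly the set of matrices X : Matrix Ω Ω F that commute with P(g) for every g ∈ G; consequently the F-dimension of this centralizer is the number of orbitals. -/
open scoped Classical

/-- The permutation matrix of a group element `g` acting on `Ω`. -/
noncomputable def permMat (G Ω F : Type*) [Group G] [MulAction G Ω] [Zero F] [One F]
    (g : G) : Matrix Ω Ω F :=
  Matrix.of fun i j => if g • i = j then 1 else 0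

/-- The orbital matrix of a subset `Δ ⊆ Ω × Ω`:
entries `A(Δ)_{i,j} = 1` if `(i,j) ∈ Δ` and `0` otherwise. -/
noncomputable def orbMat (Ω F : Type*) [Zero F] [One F] (Δ : Set (Ω × Ω)) : Matrix Ω Ω F :=
  Matrix.of fun i j => if (i, j) ∈ Δ then 1 else 0

/-- `Δ` is an orbital: an orbit of the diagonal action of `G` on `Ω × Ω`. -/
def IsOrbital (G Ω : Type*) [Group G] [MulAction G Ω] (Δ : Set (Ω × Ω)) : Prop :=
  ∃ p : Ω × Ω, Δ = MulAction.orbit G p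

/-- The centralizer of the permutation representation: the space of matrices commuting
with `P(g)` for every `g ∈ G`, as an `F`-submodule of `Matrix Ω Ω F`. -/
noncomputable def centralizerAlg (G Ω F : Type*) [Group G] [MulAction G Ω] [Fintype Ω]
    [Field F] : Submodule F (Matrix Ω Ω F) where
  carrier := {X | ∀ g : G, X * permMat G Ω F g = permMat G Ω F g * X}
  add_mem' := by
    intro a b ha hb g
    rw [add_mul, mul_add, ha g, hb g]
  zero_mem' := by
    intro g
    rw [zero_mul, mul_zero]
  smul_mem' := by
    intro c X hX g
    rw [Matrix.smul_mul, Matrix.mul_smul, hX g]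

/-- The orbital matrices are linearly independent, their span is exactly the centralizer
of the permutation representation, and hence the dimension of the centralizer equals
the number of orbitals. -/
theorem orbital_matrices_basis_of_centralizer {G Ω F : Type*} [Group G] [Fintype G]
    [Fintype Ω] [MulAction G Ω] [Field F] :
    LinearIndependent F
        (fun Δ : {Δ : Set (Ω × Ω) // IsOrbital G Ω Δ} => orbMat Ω F Δ.1) ∧
    Submodule.span F
        (Set.range (fun Δ : {Δ : Set (Ω × Ω) // IsOrbital G Ω Δ} => orbMat Ω F Δ.1))
      = centralizerAlg G Ω F ∧
    Module.finrank F (centralizerAlg G Ω F)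
      = Nat.card {Δ : Set (Ω × Ω) // IsOrbital G Ω Δ} := by
  classical
  -- entrywise formulas for multiplication by permutation matrices
  have hperm_mul : ∀ (X : Matrix Ω Ω F) (g : G) (i j : Ω),
      (permMat G Ω F g * X) i j = X (g • i) j := by
    intro X g i j
    rw [Matrix.mul_apply, Finset.sum_eq_single (g • i)]
    · simp [permMat]
    · intro k _ hk
      have : g • i ≠ k := fun h => hk h.symm
      simp [permMat, this]
    · simp
  have hmul_perm : ∀ (X : Matrix Ω Ω F) (g : G) (i j : Ω),
      (X * permMat G Ω F g) i j = X i (g⁻¹ • j) := by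
    intro X g i j
    rw [Matrix.mul_apply, Finset.sum_eq_single (g⁻¹ • j)]
    · simp [permMat]
    · intro k _ hk
      have : g • k ≠ j := by
        intro h; apply hk; rw [← h, inv_smul_smul]
      simp [permMat, this]
    · simp
  -- orbitals containing a common point coincide
  have horb : ∀ (Δ : Set (Ω × Ω)), IsOrbital G Ω Δ → ∀ p ∈ Δ, Δ = MulAction.orbit G p := by
    rintro Δ ⟨q, rfl⟩ p hp
    exact ((MulAction.orbit_eq_iff).mpr hp).symm
  -- centralizer membership is invariance of entries under the diagonal action
  have hcent : ∀ X : Matrix Ω Ω F,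
      X ∈ centralizerAlg G Ω F ↔ ∀ (g : G) (i j : Ω), X (g • i) (g • j) = X i j := by
    intro X
    constructor
    · intro hX g i j
      have h1 : (permMat G Ω F g * X) i (g • j) = (X * permMat G Ω F g) i (g • j) :=
        (congrFun (congrFun (hX g) i) (g • j)).symm
      rw [hperm_mul, hmul_perm, inv_smul_smul] at h1
      exact h1
    · intro hX g
      ext i j
      rw [hmul_perm, hperm_mul]
      have := hX g i (g⁻¹ • j)
      rw [smul_inv_smul] at this
      exact this.symm
  -- linear independence
  have hLI : LinearIndependent F
      (fun Δ : {Δ : Set (Ω × Ω) // IsOrbital G Ω Δ} => orbMat Ω F Δ.1) := by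
    rw [Fintype.linearIndependent_iff]
    intro c hc Δ₀
    obtain ⟨⟨i, j⟩, hp⟩ := Δ₀.2
    have hpmem : (i, j) ∈ Δ₀.1 := by rw [hp]; exact MulAction.mem_orbit_self _
    have h0 := congrFun (congrFun hc i) j
    have h : ∑ Δ : {Δ : Set (Ω × Ω) // IsOrbital G Ω Δ},
        c Δ * (if (i, j) ∈ Δ.1 then (1 : F) else 0) = 0 := by
      simpa [Matrix.sum_apply, orbMat] using h0
    rw [Finset.sum_eq_single Δ₀] at h
    · simpa [hpmem] using h
    · intro Δ _ hΔ
      have hnot : (i, j) ∉ Δ.1 := by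
        intro hmem
        apply hΔ
        apply Subtype.ext
        rw [horb Δ.1 Δ.2 _ hmem, horb Δ₀.1 Δ₀.2 _ hpmem]
      simp [hnot]
    · simp
  -- span equals centralizer
  have hspan : Submodule.span F
        (Set.range (fun Δ : {Δ : Set (Ω × Ω) // IsOrbital G Ω Δ} => orbMat Ω F Δ.1))
      = centralizerAlg G Ω F := by
    apply le_antisymm
    · rw [Submodule.span_le]
      rintro _ ⟨Δ, rfl⟩
      rw [SetLike.mem_coe, hcent]
      intro g i j
      obtain ⟨q, hq⟩ := Δ.2
      have hiff : (g • i, g • j) ∈ Δ.1 ↔ (i, j) ∈ Δ.1 := by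
        rw [hq]
        constructor
        · rintro ⟨h, hh⟩
          have hh' : h • q = (g • i, g • j) := hh
          refine ⟨g⁻¹ * h, ?_⟩
          show (g⁻¹ * h) • q = (i, j)
          rw [mul_smul, hh']
          simp [Prod.smul_mk]
        · rintro ⟨h, hh⟩
          have hh' : h • q = (i, j) := hh
          refine ⟨g * h, ?_⟩
          show (g * h) • q = (g • i, g • j)
          rw [mul_smul, hh']
          simp [Prod.smul_mk]
      simp only [orbMat, Matrix.of_apply]
      simp [hiff]
    · intro X hX
      have hinv : ∀ (g : G) (i j : Ω), X (g • i) (g • j) = X i j := (hcent X).mp hX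
      have hex : ∀ Δ : {Δ : Set (Ω × Ω) // IsOrbital G Ω Δ},
          ∃ p : Ω × Ω, Δ.1 = MulAction.orbit G p := fun Δ => Δ.2
      choose rep hrep using hex
      have hXeq : X = ∑ Δ : {Δ : Set (Ω × Ω) // IsOrbital G Ω Δ},
          X (rep Δ).1 (rep Δ).2 • orbMat Ω F Δ.1 := by
        ext i j
        have hsum : (∑ Δ : {Δ : Set (Ω × Ω) // IsOrbital G Ω Δ},
            X (rep Δ).1 (rep Δ).2 • orbMat Ω F Δ.1) i j
            = ∑ Δ : {Δ : Set (Ω × Ω) // IsOrbital G Ω Δ},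
              X (rep Δ).1 (rep Δ).2 * (if (i, j) ∈ Δ.1 then (1 : F) else 0) := by
          simp [Matrix.sum_apply, orbMat]
        rw [hsum]
        set Δ₀ : {Δ : Set (Ω × Ω) // IsOrbital G Ω Δ} :=
          ⟨MulAction.orbit G (i, j), ⟨(i, j), rfl⟩⟩ with hΔ₀
        rw [Finset.sum_eq_single Δ₀]
        · have hmem : (i, j) ∈ Δ₀.1 := MulAction.mem_orbit_self _
          rw [if_pos hmem, mul_one]
          have hij : (i, j) ∈ MulAction.orbit G (rep Δ₀) := by
            rw [← hrep Δ₀]; exact hmem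
          obtain ⟨g, hg⟩ := hij
          have hgg : g • rep Δ₀ = (i, j) := hg
          have := hinv g (rep Δ₀).1 (rep Δ₀).2
          have hg1 : g • (rep Δ₀).1 = i := by
            have := congrArg Prod.fst hgg; simpa using this
          have hg2 : g • (rep Δ₀).2 = j := by
            have := congrArg Prod.snd hgg; simpa using this
          rw [hg1, hg2] at this
          exact this
        · intro Δ _ hΔ
          have hnot : (i, j) ∉ Δ.1 := by
            intro hmem
            apply hΔ
            apply Subtype.ext
            rw [horb Δ.1 Δ.2 _ hmem]
          simp [hnot]
        · simp
      rw [hXeq]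
      exact Submodule.sum_mem _ fun Δ _ =>
        Submodule.smul_mem _ _ (Submodule.subset_span ⟨Δ, rfl⟩)
  refine ⟨hLI, hspan, ?_⟩
  rw [← hspan, finrank_span_eq_card hLI, Nat.card_eq_fintype_card]
end

section
/- Let G be a finite group acting on a finite set Ω and F a field. For any two orbitals Δ_p, Δ_q, the (i,j) entry of the product A(Δ_p) * A(Δ_q) equals the natural number card {k ∈ Ω | (i,k) ∈ Δ_p ∧ (k,j) ∈ Δ_q} (cast into F), and this number is the same for all pairs (i,j) lying in the same orbital; hence there exist natural numbers C_{pq}^r such that A(Δ_p) * A(Δ_q) = Σ_r C_{pq}^r • A(Δ_r), the sum running over all orbitals Δ_r. -/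
open scoped Classical

/-- For orbitals `Δp`, `Δq`: the `(i,j)` entry of `A(Δp) * A(Δq)` is the number of
`k` with `(i,k) ∈ Δp` and `(k,j) ∈ Δq`; this number is constant on orbitals; hence
`A(Δp) * A(Δq)` is a non-negative integer combination of the orbital matrices. -/
theorem orbital_matrices_multiplication {G Ω F : Type*} [Group G] [Fintype G] [Fintype Ω]
    [MulAction G Ω] [Field F] (Δp Δq : Set (Ω × Ω))
    (hp : IsOrbital G Ω Δp) (hq : IsOrbital G Ω Δq) :
    (∀ i j : Ω, (orbMat Ω F Δp * orbMat Ω F Δq) i j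
        = (Fintype.card {k : Ω // (i, k) ∈ Δp ∧ (k, j) ∈ Δq} : F)) ∧
    (∀ Δ : Set (Ω × Ω), IsOrbital G Ω Δ → ∀ i j i' j' : Ω, (i, j) ∈ Δ → (i', j') ∈ Δ →
        Fintype.card {k : Ω // (i, k) ∈ Δp ∧ (k, j) ∈ Δq}
          = Fintype.card {k : Ω // (i', k) ∈ Δp ∧ (k, j') ∈ Δq}) ∧
    ∃ C : {Δ : Set (Ω × Ω) // IsOrbital G Ω Δ} → ℕ,
      orbMat Ω F Δp * orbMat Ω F Δq
        = ∑ r : {Δ : Set (Ω × Ω) // IsOrbital G Ω Δ}, C r • orbMat Ω F r.1 := by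
  classical
  -- Invariance of orbitals under the action
  have inv : ∀ (Δ : Set (Ω × Ω)), IsOrbital G Ω Δ → ∀ (g : G) (x y : Ω),
      (x, y) ∈ Δ → (g • x, g • y) ∈ Δ := by
    rintro Δ ⟨p, rfl⟩ g x y ⟨h', hh⟩
    refine ⟨g * h', ?_⟩
    show (g * h') • p = _
    rw [mul_smul]
    rw [show h' • p = (x, y) from hh]
    rfl
  -- entry formula
  have entry : ∀ i j : Ω, (orbMat Ω F Δp * orbMat Ω F Δq) i j
      = (Fintype.card {k : Ω // (i, k) ∈ Δp ∧ (k, j) ∈ Δq} : F) := by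
    intro i j
    simp only [Matrix.mul_apply, orbMat, Matrix.of_apply, ite_mul, one_mul, zero_mul]
    rw [Fintype.card_subtype]
    rw [← Finset.sum_boole]
    congr 1
    ext k
    by_cases h1 : (i, k) ∈ Δp <;> by_cases h2 : (k, j) ∈ Δq <;> simp [h1, h2]
  -- invariance of the count under the action
  have const : ∀ (g : G) (i j : Ω),
      Fintype.card {k : Ω // (i, k) ∈ Δp ∧ (k, j) ∈ Δq}
        = Fintype.card {k : Ω // (g • i, k) ∈ Δp ∧ (k, g • j) ∈ Δq} := by
    intro g i j
    apply Fintype.card_congr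
    refine Equiv.subtypeEquiv (MulAction.toPerm g) fun k => ?_
    simp only [MulAction.toPerm_apply]
    constructor
    · rintro ⟨h1, h2⟩
      exact ⟨inv _ hp g _ _ h1, inv _ hq g _ _ h2⟩
    · rintro ⟨h1, h2⟩
      have a1 := inv _ hp g⁻¹ _ _ h1
      have a2 := inv _ hq g⁻¹ _ _ h2
      simp only [inv_smul_smul] at a1 a2
      exact ⟨a1, a2⟩
  have part2 : ∀ Δ : Set (Ω × Ω), IsOrbital G Ω Δ →
      ∀ i j i' j' : Ω, (i, j) ∈ Δ → (i', j') ∈ Δ →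
        Fintype.card {k : Ω // (i, k) ∈ Δp ∧ (k, j) ∈ Δq}
          = Fintype.card {k : Ω // (i', k) ∈ Δp ∧ (k, j') ∈ Δq} := by
    rintro Δ ⟨p, rfl⟩ i j i' j' ⟨g, hg⟩ ⟨g', hg'⟩
    have key : (g' * g⁻¹) • (i, j) = ((i', j') : Ω × Ω) := by
      rw [← hg, ← hg', mul_smul, inv_smul_smul]
    have := const (g' * g⁻¹) i j
    rw [show (g' * g⁻¹) • i = i' from congrArg Prod.fst key,
        show (g' * g⁻¹) • j = j' from congrArg Prod.snd key] at this
    exact this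
  refine ⟨entry, part2, ?_⟩
  -- choose a representative point for each orbital
  have hne : ∀ r : {Δ : Set (Ω × Ω) // IsOrbital G Ω Δ}, r.1.Nonempty := by
    rintro ⟨Δ, p, rfl⟩
    exact ⟨p, MulAction.mem_orbit_self p⟩
  refine ⟨fun r => Fintype.card {k : Ω // ((hne r).choose.1, k) ∈ Δp ∧
      (k, (hne r).choose.2) ∈ Δq}, ?_⟩
  ext i j
  rw [entry i j]
  set r₀ : {Δ : Set (Ω × Ω) // IsOrbital G Ω Δ} :=
    ⟨MulAction.orbit G ((i, j) : Ω × Ω), ⟨(i, j), rfl⟩⟩ with hr₀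
  rw [Matrix.sum_apply]
  rw [Finset.sum_eq_single r₀]
  · have hmem : ((i, j) : Ω × Ω) ∈ r₀.1 := MulAction.mem_orbit_self _
    have := part2 r₀.1 r₀.2 (hne r₀).choose.1 (hne r₀).choose.2 i j
      (by simpa using (hne r₀).choose_spec) hmem
    simp [orbMat, Matrix.smul_apply, hmem, this]
  · rintro r - hr
    have hnotmem : ((i, j) : Ω × Ω) ∉ r.1 := by
      intro hmem
      apply hr
      obtain ⟨Δ, p, rfl⟩ := r
      have : MulAction.orbit G ((i, j) : Ω × Ω) = MulAction.orbit G p :=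
        MulAction.orbit_eq_iff.mpr hmem
      simp [hr₀, this]
    simp [orbMat, Matrix.smul_apply, hnotmem]
  · intro h
    exact absurd (Finset.mem_univ r₀) h
end

section
/- Let G be a finite group and V a finite-dimensional complex representation of G (a finite-dimensional module over MonoidAlgebra ℂ G). If the ring of G-equivariant linear endomorphisms of V is commutative, then any two distinct simple G-submodules W₁ ≠ W₂ of V are non-isomorphic as G-representations (i.e., V is multiplicity-free). -/
/-!
By Maschke's theorem `W₁` has an equivariant complement. An isomorphism `W₁ ≃ W₂`, extended by
zero on that complement, is an equivariant endomorphism of `V`; since it commutes with the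
projection onto `W₁`, it maps `W₁` into `W₁ ⊓ W₂ = ⊥`, which is absurd for `W₁ ≠ 0`.
-/

theorem LinearMap.eq_zero_of_disjoint_of_commute_endomorphisms {R M : Type*} [Ring R]
    [AddCommGroup M] [Module R M] (hcomm : ∀ f g : Module.End R M, f * g = g * f)
    {N₁ N₂ : Submodule R M} (hN : Disjoint N₁ N₂) {C : Submodule R M} (hC : IsCompl N₁ C)
    (φ : N₁ →ₗ[R] N₂) : φ = 0 := by
  set f : Module.End R M := N₂.subtype ∘ₗ φ ∘ₗ N₁.projectionOnto C hC
  ext x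
  have hfx : f x = φ x := by simp [f]
  have hmem : (φ x : M) ∈ N₁ := by
    have := congr($(hcomm f (N₁.projection C hC)) x)
    simp only [Module.End.mul_apply, Submodule.projection_apply_left] at this
    rw [← hfx, this]
    exact Submodule.projection_apply_mem hC _
  simpa using hN.le_bot ⟨hmem, (φ x).2⟩

theorem multiplicity_free_of_commutative_endomorphisms_general
    {G : Type*} [Group G] [Fintype G] {V : Type*} [AddCommGroup V]
    [Module (MonoidAlgebra ℂ G) V]
    (hcomm : ∀ f g : Module.End (MonoidAlgebra ℂ G) V, f * g = g * f)
    (W₁ W₂ : Submodule (MonoidAlgebra ℂ G) V)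
    (h₁ : IsSimpleModule (MonoidAlgebra ℂ G) W₁)
    (h₂ : IsSimpleModule (MonoidAlgebra ℂ G) W₂)
    (hne : W₁ ≠ W₂) :
    IsEmpty (W₁ ≃ₗ[MonoidAlgebra ℂ G] W₂) := by
  refine ⟨fun φ => ?_⟩
  have hdisj : Disjoint W₁ W₂ :=
    (isSimpleModule_iff_isAtom.mp h₁).disjoint_of_ne (isSimpleModule_iff_isAtom.mp h₂) hne
  obtain ⟨C, hC⟩ := MonoidAlgebra.Submodule.exists_isCompl W₁
  have hφ := LinearMap.eq_zero_of_disjoint_of_commute_endomorphisms hcomm hdisj hC φ.toLinearMap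
  have := IsSimpleModule.nontrivial (MonoidAlgebra ℂ G) W₁
  obtain ⟨w, hw⟩ := exists_ne (0 : W₁)
  exact hw (φ.map_eq_zero_iff.mp congr($hφ w))

/-- If the ring of `G`-equivariant endomorphisms of a finite-dimensional complex
representation `V` of a finite group `G` is commutative, then any two distinct simple
`G`-submodules of `V` are non-isomorphic as representations, i.e. `V` is
multiplicity-free. -/
theorem multiplicity_free_of_commutative_endomorphisms
    {G : Type*} [Group G] [Fintype G] {V : Type*} [AddCommGroup V]
    [Module ℂ V] [Module (MonoidAlgebra ℂ G) V] [IsScalarTower ℂ (MonoidAlgebra ℂ G) V]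
    [FiniteDimensional ℂ V]
    (hcomm : ∀ f g : Module.End (MonoidAlgebra ℂ G) V, f * g = g * f)
    (W₁ W₂ : Submodule (MonoidAlgebra ℂ G) V)
    (h₁ : IsSimpleModule (MonoidAlgebra ℂ G) W₁)
    (h₂ : IsSimpleModule (MonoidAlgebra ℂ G) W₂)
    (hne : W₁ ≠ W₂) :
    IsEmpty (W₁ ≃ₗ[MonoidAlgebra ℂ G] W₂) :=
  multiplicity_free_of_commutative_endomorphisms_general hcomm W₁ W₂ h₁ h₂ hne
end
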